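/- Let w ∈ H_0^1(Ω), ψ ∈ W^{2,∞}(Ω) with Δψ ≤ 0 a.e., and τ > 0. Define A(w,v) = ⟨w,v⟩_{L²} + τ(a(w,v) + b(w,v)). Then A(w,w) ≥ ‖w‖²_{L²(Ω)} + τ‖∇w‖²_{L²(Ω)}. -/

import Mathlib

open MeasureTheory RealInnerProductSpace

noncomputable def lap {d : ℕ} (ψ : EuclideanSpace ℝ (Fin d) → ℝ)
    (x : EuclideanSpace ℝ (Fin d)) : ℝ :=
  ∑ i : Fin d,
    fderiv ℝ (fun y => fderiv ℝ ψ y (EuclideanSpace.single i 1)) x (EuclideanSpace.single i 1)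

def MemH10 {d : ℕ} (Ω : Set (EuclideanSpace ℝ (Fin d)))
    (w : EuclideanSpace ℝ (Fin d) → ℝ) : Prop :=
  Differentiable ℝ w ∧
  MemLp w 2 (volume.restrict Ω) ∧
  MemLp (fun x => gradient w x) 2 (volume.restrict Ω) ∧
  ∀ x ∈ frontier Ω, w x = 0

def MemW2Inf {d : ℕ} (Ω : Set (EuclideanSpace ℝ (Fin d)))
    (ψ : EuclideanSpace ℝ (Fin d) → ℝ) : Prop :=
  ContDiff ℝ 2 ψ ∧
  ∃ C : ℝ, ∀ x ∈ Ω, |ψ x| ≤ C ∧ ‖gradient ψ x‖ ≤ C ∧ |lap ψ x| ≤ C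

noncomputable def aForm {d : ℕ} (Ω : Set (EuclideanSpace ℝ (Fin d)))
    (w v : EuclideanSpace ℝ (Fin d) → ℝ) : ℝ :=
  ∫ x in Ω, ⟪gradient w x, gradient v x⟫

noncomputable def bForm {d : ℕ} (Ω : Set (EuclideanSpace ℝ (Fin d)))
    (ψ w v : EuclideanSpace ℝ (Fin d) → ℝ) : ℝ :=
  ∫ x in Ω, w x * ⟪gradient ψ x, gradient v x⟫

noncomputable def AForm {d : ℕ} (Ω : Set (EuclideanSpace ℝ (Fin d)))
    (ψ : EuclideanSpace ℝ (Fin d) → ℝ) (τ : ℝ)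
    (w v : EuclideanSpace ℝ (Fin d) → ℝ) : ℝ :=
  (∫ x in Ω, w x * v x) + τ * (aForm Ω w v + bForm Ω ψ w v)

/-!
Because `w` vanishes on `∂Ω`, both `w²` and its derivative `2 w ∇w` vanish there, so extending
`w²` by zero off `Ω` gives a function differentiable on all of `ℝᵈ`. Integrating by parts against
`∂ᵢψ` on the whole space therefore produces no boundary term, which is Green's identity
`∫ ∇(w²)·∇ψ = -∫ w² Δψ`. Hence `b(w,w) = -½ ∫ w² Δψ ≥ 0`, and `a(w,w) = ‖∇w‖²`.
-/

open Set Filter Topology Asymptotics Bornology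

section ZeroExtension

variable {𝕜 E F : Type*} [NontriviallyNormedField 𝕜] [NormedAddCommGroup E] [NormedSpace 𝕜 E]
  [NormedAddCommGroup F] [NormedSpace 𝕜 F]

theorem HasFDerivAt.indicator {s : Set E} {f : E → F} {f' : E →L[𝕜] F} {x : E}
    (hf : HasFDerivAt f f' x) (hfr : x ∈ frontier s → f x = 0 ∧ f' = 0) :
    HasFDerivAt (s.indicator f) (s.indicator (fun _ => f') x) x := by
  by_cases hx : x ∈ interior s
  · rw [indicator_of_mem (interior_subset hx)]
    refine hf.congr_of_eventuallyEq ?_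
    filter_upwards [mem_interior_iff_mem_nhds.mp hx] with y hy
    exact indicator_of_mem hy f
  by_cases hx' : x ∈ closure s
  · obtain ⟨hfx, rfl⟩ := hfr ⟨hx', hx⟩
    rw [indicator_zero]
    refine HasFDerivAt.of_isLittleO ?_
    have hlo : (fun y => f y) =o[𝓝 x] fun y => y - x := by
      simpa [hfx] using hf.isLittleO
    refine (IsBigO.of_bound' (Eventually.of_forall fun y => ?_)).trans_isLittleO hlo
    simpa [indicator_apply_eq_zero.mpr fun _ => hfx] using norm_indicator_le_norm_self f y
  · have hxs : x ∉ s := fun h => hx' (subset_closure h)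
    rw [indicator_of_notMem hxs]
    refine (hasFDerivAt_const (0 : F) x).congr_of_eventuallyEq ?_
    filter_upwards [isClosed_closure.isOpen_compl.mem_nhds hx'] with y hy
    exact indicator_of_notMem (fun h => hy (subset_closure h)) _

end ZeroExtension

theorem MeasureTheory.setIntegral_eq_setIntegral_interior {α E : Type*} [TopologicalSpace α]
    [MeasurableSpace α] [OpensMeasurableSpace α] [NormedAddCommGroup E] [NormedSpace ℝ E]
    {μ : Measure α} {s : Set α} {f : α → E} (hf : ∀ x ∈ frontier s, f x = 0) :
    ∫ x in s, f x ∂μ = ∫ x in interior s, f x ∂μ := by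
  have hcl : ∀ᵐ x ∂μ.restrict s, x ∈ closure s := by
    rw [ae_iff, ← compl_def, Measure.restrict_apply measurableSet_closure.compl,
      inter_comm, ← sdiff_eq, sdiff_eq_empty.mpr subset_closure, measure_empty]
  have hae : f =ᵐ[μ.restrict s] (interior s).indicator f := by
    filter_upwards [hcl] with x hx
    by_cases hxi : x ∈ interior s
    · rw [indicator_of_mem hxi]
    · rw [indicator_of_notMem hxi, hf x ⟨hx, hxi⟩]
  rw [integral_congr_ae hae, integral_indicator measurableSet_interior,
    Measure.restrict_restrict measurableSet_interior, inter_eq_left.mpr interior_subset]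

namespace MeasureTheory.IntegrableOn

variable {X E : Type*} [MetricSpace X] [ProperSpace X] [MeasurableSpace X]
  [OpensMeasurableSpace X] [NormedAddCommGroup E] [NormedSpace ℝ E] {μ : Measure X} {s : Set X}
  {g : X → ℝ}

theorem of_continuous_of_isBounded [IsFiniteMeasureOnCompacts μ] (hsb : IsBounded s)
    (hg : Continuous g) : IntegrableOn g s μ :=
  (hg.continuousOn.integrableOn_compact hsb.isCompact_closure).mono_set subset_closure

theorem apply_mul_of_continuous {p' : X → E →L[ℝ] ℝ} (hp' : IntegrableOn p' s μ)
    (hs : MeasurableSet s) (hsb : IsBounded s) (hg : Continuous g) (v : E) :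
    IntegrableOn (fun x => p' x v * g x) s μ :=
  IntegrableOn.mul_continuousOn_of_subset (hp'.apply_continuousLinearMap v) hg.continuousOn hs
    hsb.isCompact_closure subset_closure

end MeasureTheory.IntegrableOn

section IntegrationByParts

variable {E : Type*} [NormedAddCommGroup E] [NormedSpace ℝ E] [FiniteDimensional ℝ E]
  [MeasurableSpace E] [BorelSpace E] {μ : Measure E} [μ.IsAddHaarMeasure]
  {s : Set E} {p g : E → ℝ} {p' : E → E →L[ℝ] ℝ}

theorem setIntegral_mul_fderiv_eq_neg_fderiv_mul_of_frontier (hs : MeasurableSet s)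
    (hsb : IsBounded s) (hp : ∀ x, HasFDerivAt p (p' x) x)
    (hfr : ∀ x ∈ frontier s, p x = 0 ∧ p' x = 0) (hp' : IntegrableOn p' s μ)
    (hg : ContDiff ℝ 1 g) (v : E) :
    ∫ x in s, p x * fderiv ℝ g x v ∂μ = -∫ x in s, p' x v * g x ∂μ := by
  have hpc : Continuous p := continuous_iff_continuousAt.2 fun x => (hp x).continuousAt
  have hext : ∀ x, HasFDerivAt (s.indicator p) (s.indicator p' x) x := fun x =>
    (hp x).indicator (hfr x)
  have hD : ∀ x, fderiv ℝ (s.indicator p) x v = s.indicator (fun y => p' y v) x := by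
    intro x
    rw [(hext x).fderiv]
    by_cases hx : x ∈ s <;> simp [hx]
  have hind : ∀ f h : E → ℝ,
      (fun x => s.indicator f x * h x) = s.indicator (fun x => f x * h x) := fun f h =>
    funext fun x => (indicator_mul_left s f h).symm
  have hDg : Continuous (fderiv ℝ g · v) :=
    (hg.continuous_fderiv one_ne_zero).clm_apply continuous_const
  have key := integral_mul_fderiv_eq_neg_fderiv_mul_of_integrable (μ := μ) (v := v)
    (f := s.indicator p) (g := g)
    (by
      simp_rw [hD, hind, integrable_indicator_iff hs]
      exact hp'.apply_mul_of_continuous hs hsb hg.continuous v)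
    (by
      simp_rw [hind, integrable_indicator_iff hs]
      exact IntegrableOn.of_continuous_of_isBounded hsb (hpc.mul hDg))
    (by
      simp_rw [hind, integrable_indicator_iff hs]
      exact IntegrableOn.of_continuous_of_isBounded hsb (hpc.mul hg.continuous))
    (fun x _ => (hext x).differentiableAt)
    (fun x _ => hg.differentiable one_ne_zero x)
  simp_rw [hD, hind, integral_indicator hs] at key
  exact key

end IntegrationByParts

section Green

variable {d : ℕ}

theorem ContinuousLinearMap.apply_gradient_eq_sum (ℓ : EuclideanSpace ℝ (Fin d) →L[ℝ] ℝ)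
    (ψ : EuclideanSpace ℝ (Fin d) → ℝ) (x : EuclideanSpace ℝ (Fin d)) :
    ℓ (gradient ψ x) = ∑ i, ℓ (EuclideanSpace.single i 1) *
      fderiv ℝ ψ x (EuclideanSpace.single i 1) := by
  conv_lhs => rw [← (EuclideanSpace.basisFun (Fin d) ℝ).sum_repr' (gradient ψ x)]
  simp only [map_sum, map_smul, smul_eq_mul, EuclideanSpace.basisFun_apply]
  refine Finset.sum_congr rfl fun i _ => ?_
  rw [mul_comm, gradient, real_inner_comm, InnerProductSpace.toDual_symm_apply]

theorem setIntegral_apply_gradient_eq_neg_setIntegral_mul_lap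
    {μ : Measure (EuclideanSpace ℝ (Fin d))} [μ.IsAddHaarMeasure]
    {s : Set (EuclideanSpace ℝ (Fin d))} (hs : MeasurableSet s) (hsb : IsBounded s)
    {p ψ : EuclideanSpace ℝ (Fin d) → ℝ} {p' : EuclideanSpace ℝ (Fin d) → _ →L[ℝ] ℝ}
    (hp : ∀ x, HasFDerivAt p (p' x) x) (hfr : ∀ x ∈ frontier s, p x = 0 ∧ p' x = 0)
    (hp' : IntegrableOn p' s μ) (hψ : ContDiff ℝ 2 ψ) :
    ∫ x in s, p' x (gradient ψ x) ∂μ = -∫ x in s, p x * lap ψ x ∂μ := by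
  set e : Fin d → EuclideanSpace ℝ (Fin d) := fun i => EuclideanSpace.single i 1
  set u : Fin d → EuclideanSpace ℝ (Fin d) → ℝ := fun i y => fderiv ℝ ψ y (e i)
  have hu : ∀ i, ContDiff ℝ 1 (u i) := fun i =>
    (hψ.fderiv_right (by norm_num)).clm_apply contDiff_const
  have hDu : ∀ i, Continuous (fderiv ℝ (u i) · (e i)) := fun i =>
    ((hu i).continuous_fderiv one_ne_zero).clm_apply continuous_const
  have hpc : Continuous p := continuous_iff_continuousAt.2 fun x => (hp x).continuousAt
  have hint : ∀ i, IntegrableOn (fun x => p x * fderiv ℝ (u i) x (e i)) s μ := fun i =>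
    IntegrableOn.of_continuous_of_isBounded hsb (hpc.mul (hDu i))
  calc ∫ x in s, p' x (gradient ψ x) ∂μ
      = ∫ x in s, ∑ i, p' x (e i) * u i x ∂μ := by
        simp only [ContinuousLinearMap.apply_gradient_eq_sum]; rfl
    _ = ∑ i, ∫ x in s, p' x (e i) * u i x ∂μ := integral_finsetSum _ fun i _ =>
        hp'.apply_mul_of_continuous hs hsb (hu i).continuous (e i)
    _ = ∑ i, -∫ x in s, p x * fderiv ℝ (u i) x (e i) ∂μ := by
        simp only [setIntegral_mul_fderiv_eq_neg_fderiv_mul_of_frontier hs hsb hp hfr hp' (hu _),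
          neg_neg]
    _ = -∫ x in s, p x * lap ψ x ∂μ := by
        rw [Finset.sum_neg_distrib, ← integral_finsetSum _ fun i _ => hint i]
        simp only [lap, Finset.mul_sum]; rfl

end Green

theorem bForm_self_nonneg {d : ℕ} {Ω : Set (EuclideanSpace ℝ (Fin d))} (hΩ : IsBounded Ω)
    {w ψ : EuclideanSpace ℝ (Fin d) → ℝ} (hw : Differentiable ℝ w)
    (hw0 : ∀ x ∈ frontier Ω, w x = 0) (hgw : IntegrableOn (gradient w) Ω)
    (hψ : ContDiff ℝ 2 ψ) (hΔψ : ∀ᵐ x ∂(volume.restrict Ω), lap ψ x ≤ 0) :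
    0 ≤ bForm Ω ψ w w := by
  set p' := fun x => (2 * w x) • fderiv ℝ w x
  have hp : ∀ x, HasFDerivAt (fun y => w y ^ 2) (p' x) x := fun x => by
    simpa [p'] using (hw x).hasFDerivAt.pow 2
  have hfr : ∀ x ∈ frontier (interior Ω), w x ^ 2 = 0 ∧ p' x = 0 := fun x hx => by
    simp [p', hw0 x (frontier_interior_subset hx)]
  have hDw : IntegrableOn (fderiv ℝ w) Ω := by
    have : fderiv ℝ w = InnerProductSpace.toDual ℝ _ ∘ gradient w :=
      funext fun x => ((InnerProductSpace.toDual ℝ _).apply_symm_apply _).symm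
    rw [this]
    exact (LinearIsometryEquiv.integrable_comp_iff _).2 hgw
  have hp' : IntegrableOn p' (interior Ω) :=
    (hDw.mono_set interior_subset).continuousOn_smul_of_subset
      (continuous_const.mul hw.continuous).continuousOn hΩ.isCompact_closure
      measurableSet_interior (interior_subset.trans subset_closure)
  have hgreen := setIntegral_apply_gradient_eq_neg_setIntegral_mul_lap measurableSet_interior
    (hΩ.subset interior_subset) hp hfr hp' hψ
  have hlap : ∫ x in interior Ω, w x ^ 2 * lap ψ x ≤ 0 := by
    refine setIntegral_nonpos_of_ae_restrict ?_
    filter_upwards [ae_restrict_of_ae_restrict_of_subset interior_subset hΔψ] with x hx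
    exact mul_nonpos_of_nonneg_of_nonpos (sq_nonneg _) hx
  have hb : bForm Ω ψ w w = 2⁻¹ * ∫ x in interior Ω, p' x (gradient ψ x) := by
    rw [bForm, setIntegral_eq_setIntegral_interior fun x hx => by simp [hw0 x hx],
      ← integral_const_mul]
    congr 1
    funext x
    simp only [p', smul_apply, smul_eq_mul, gradient,
      ← InnerProductSpace.toDual_symm_apply, real_inner_comm]
    ring
  rw [hb, hgreen]
  linarith

theorem semi_discrete_coercivity_general {d : ℕ} (Ω : Set (EuclideanSpace ℝ (Fin d)))
    (hΩbdd : Bornology.IsBounded Ω)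
    (w ψ : EuclideanSpace ℝ (Fin d) → ℝ)
    (hw : MemH10 Ω w) (hψ : MemW2Inf Ω ψ)
    (hΔψ : ∀ᵐ x ∂(volume.restrict Ω), lap ψ x ≤ 0)
    (τ : ℝ) (hτ : 0 < τ) :
    (∫ x in Ω, (w x)^2) + τ * ∫ x in Ω, ‖gradient w x‖^2 ≤ AForm Ω ψ τ w w := by
  obtain ⟨hwd, -, hgw, hw0⟩ := hw
  have : IsFiniteMeasure (volume.restrict Ω) :=
    isFiniteMeasure_restrict.2 hΩbdd.measure_lt_top.ne
  have hb := bForm_self_nonneg hΩbdd hwd hw0 (hgw.integrable one_le_two) hψ.1 hΔψ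
  simp only [AForm, aForm, real_inner_self_eq_norm_sq, ← sq]
  nlinarith [mul_nonneg hτ.le hb]

/-- Semi-discrete coercivity under Δψ ≤ 0:
A(w,w) ≥ ‖w‖²_{L²} + τ‖∇w‖²_{L²}. -/
theorem semi_discrete_coercivity {d : ℕ} (Ω : Set (EuclideanSpace ℝ (Fin d)))
    (hΩmeas : MeasurableSet Ω) (hΩbdd : Bornology.IsBounded Ω)
    (w ψ : EuclideanSpace ℝ (Fin d) → ℝ)
    (hw : MemH10 Ω w) (hψ : MemW2Inf Ω ψ)
    (hΔψ : ∀ᵐ x ∂(volume.restrict Ω), lap ψ x ≤ 0)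
    (τ : ℝ) (hτ : 0 < τ) :
    (∫ x in Ω, (w x)^2) + τ * ∫ x in Ω, ‖gradient w x‖^2 ≤ AForm Ω ψ τ w w :=
  semi_discrete_coercivity_general Ω hΩbdd w ψ hw hψ hΔψ τ hτ
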